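/- Fix θ ∈ ℝ. On ℝ³ with coordinates (x,y,u), define the polynomial vector fields e₁ = (1 − y + (θ/3)u)∂ₓ + (−(θ/3)x − (1/6)u)∂_y + x∂ᵤ and e₂ = −x∂ₓ + (1 − y)∂_y − u∂ᵤ. Then their Lie bracket vanishes identically: [e₁,e₂] = 0. In particular e₁, e₂ span a 2-dimensional Abelian Lie algebra of vector fields on ℝ³. -/
import Mathlib


/-- Lie bracket of two vector fields `V, W : ℝ³ → ℝ³`:
`[V,W](p) = DW(p)·V(p) − DV(p)·W(p)`. -/
noncomputable def lieBracket (V W : ℝ × ℝ × ℝ → ℝ × ℝ × ℝ) : ℝ × ℝ × ℝ → ℝ × ℝ × ℝ :=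
  fun p => fderiv ℝ W p (V p) - fderiv ℝ V p (W p)

/-- `e₁ = (1 − y + (θ/3)u)∂ₓ + (−(θ/3)x − (1/6)u)∂_y + x∂ᵤ`. -/
noncomputable def e1Theta (θ : ℝ) : ℝ × ℝ × ℝ → ℝ × ℝ × ℝ := fun p =>
  (1 - p.2.1 + (θ / 3) * p.2.2,
   -(θ / 3) * p.1 - (1 / 6) * p.2.2,
   p.1)

/-- `e₂ = −x∂ₓ + (1 − y)∂_y − u∂ᵤ`. -/
noncomputable def e2Theta : ℝ × ℝ × ℝ → ℝ × ℝ × ℝ := fun p =>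
  (-p.1, 1 - p.2.1, -p.2.2)

section Aux

/-- projection on the first coordinate -/
noncomputable def cFst : ℝ × ℝ × ℝ →L[ℝ] ℝ := ContinuousLinearMap.fst ℝ ℝ (ℝ × ℝ)
/-- projection on the second coordinate -/
noncomputable def cSnd1 : ℝ × ℝ × ℝ →L[ℝ] ℝ :=
  (ContinuousLinearMap.fst ℝ ℝ ℝ).comp (ContinuousLinearMap.snd ℝ ℝ (ℝ × ℝ))
/-- projection on the third coordinate -/
noncomputable def cSnd2 : ℝ × ℝ × ℝ →L[ℝ] ℝ :=
  (ContinuousLinearMap.snd ℝ ℝ ℝ).comp (ContinuousLinearMap.snd ℝ ℝ (ℝ × ℝ))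

/-- linear part of `e₁` -/
noncomputable def L1 (θ : ℝ) : ℝ × ℝ × ℝ →L[ℝ] ℝ × ℝ × ℝ :=
  ((θ / 3) • cSnd2 - cSnd1).prod ((((-(θ / 3)) • cFst) - ((1 : ℝ) / 6) • cSnd2).prod cFst)

/-- linear part of `e₂` -/
noncomputable def L2 : ℝ × ℝ × ℝ →L[ℝ] ℝ × ℝ × ℝ :=
  ((-1 : ℝ) • cFst).prod (((-1 : ℝ) • cSnd1).prod ((-1 : ℝ) • cSnd2))

lemma L1_apply (θ : ℝ) (p : ℝ × ℝ × ℝ) :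
    L1 θ p = ((θ / 3) * p.2.2 - p.2.1, -(θ / 3) * p.1 - (1 / 6) * p.2.2, p.1) := by
  simp only [L1, cFst, cSnd1, cSnd2, ContinuousLinearMap.prod_apply,
    ContinuousLinearMap.sub_apply, ContinuousLinearMap.smul_apply,
    ContinuousLinearMap.comp_apply, ContinuousLinearMap.coe_fst',
    ContinuousLinearMap.coe_snd', smul_eq_mul]

lemma L2_apply (p : ℝ × ℝ × ℝ) : L2 p = (-p.1, -p.2.1, -p.2.2) := by
  simp only [L2, cFst, cSnd1, cSnd2, ContinuousLinearMap.prod_apply,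
    ContinuousLinearMap.smul_apply, ContinuousLinearMap.comp_apply,
    ContinuousLinearMap.coe_fst', ContinuousLinearMap.coe_snd', smul_eq_mul]
  norm_num

lemma fderiv_e1 (θ : ℝ) (p : ℝ × ℝ × ℝ) : fderiv ℝ (e1Theta θ) p = L1 θ := by
  have h : e1Theta θ = fun q => L1 θ q + (1, 0, 0) := by
    funext q
    rw [L1_apply]
    simp only [e1Theta, Prod.mk_add_mk, Prod.mk.injEq]
    refine ⟨by ring, by ring, by ring⟩
  rw [h]
  exact ((L1 θ).hasFDerivAt.add_const (1, 0, 0)).fderiv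

lemma fderiv_e2 (p : ℝ × ℝ × ℝ) : fderiv ℝ e2Theta p = L2 := by
  have h : e2Theta = fun q => L2 q + (0, 1, 0) := by
    funext q
    rw [L2_apply]
    simp only [e2Theta, Prod.mk_add_mk, Prod.mk.injEq]
    refine ⟨by ring, by ring, by ring⟩
  rw [h]
  exact (L2.hasFDerivAt.add_const (0, 1, 0)).fderiv

end Aux

/-- For every `θ ∈ ℝ`: `[e₁,e₂] = 0`; in particular `e₁, e₂` span a 2-dimensional Abelian
Lie algebra of vector fields on `ℝ³`. -/
theorem branch_F50_symmetry_algebra (θ : ℝ) :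
    (∀ p : ℝ × ℝ × ℝ, lieBracket (e1Theta θ) e2Theta p = 0) ∧
    LinearIndependent ℝ ![e1Theta θ, e2Theta] := by
  constructor
  · intro p
    simp only [lieBracket, fderiv_e1, fderiv_e2, L1_apply, L2_apply, e1Theta, e2Theta,
      Prod.mk_sub_mk, Prod.mk_eq_zero]
    refine ⟨by ring, by ring, by ring⟩
  · rw [LinearIndependent.pair_iff]
    intro s t h
    have h0 := congrFun h (0, 0, 0)
    simp [e1Theta, e2Theta, Prod.ext_iff] at h0
    obtain ⟨h1, h2, -⟩ := h0
    constructor <;> linarith
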